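/- For each j in a finite index set K, let (A_j, p_{A_j}) be an ensemble of functions U_j^n → Im A_j satisfying the strong (α_j, β_j)-hash condition, with all A_j mutually independent. For J ⊆ K define α_J ≡ Π_{j∈J} α_j and β_J ≡ Π_{j∈J}(β_j+1) − 1. Then for every G ⊆ Π_{j∈K} U_j^n and every tuple u_K: P({A_K : (G \ {u_K}) ∩ C_{A_K}(A_K u_K) ≠ ∅}) ≤ Σ over nonempty J ⊆ K of |G_{J|J^c}|·α_J·(β_{J^c}+1)/|Im A_J| + β_K, where |Im A_J| ≡ Π_{j∈J}|Im A_j| and |G_{J|J^c}| is the maximum, over tuples u_{J^c} occurring in G, of the number of completions u_J with (u_J, u_{J^c}) ∈ G (with the convention |G_{∅|K}| = 1 and |G_{K|∅}| = |G|). -/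

import Mathlib

open Finset
open scoped Classical

/-- Collision probability `p_A({A : Au = Au'})` for an ensemble of functions. -/
noncomputable def collP {𝒜 X B : Type*} [Fintype 𝒜] (p : 𝒜 → ℝ)
    (F : 𝒜 → X → B) (u u' : X) : ℝ :=
  ∑ a : 𝒜, if F a u = F a u' then p a else 0

/-- The strong (α,β)-hash condition for an ensemble of functions `X → B`. -/
noncomputable def StrongHash {𝒜 X B : Type*} [Fintype 𝒜] [Fintype X] [Fintype B]
    (p : 𝒜 → ℝ) (F : 𝒜 → X → B) (α β : ℝ) : Prop :=
  ∀ u : X,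
    ∑ u' ∈ (Finset.univ.erase u).filter
        (fun u' => α / (Fintype.card B : ℝ) < collP p F u u'),
      collP p F u u' ≤ β

/-- `|G_{J|J^c}|`: the maximum, over tuples occurring in `G`, of the number of
completions on the `J` coordinates, with the conventions `|G_{∅|K}| = 1` and
`|G_{K|∅}| = |G|`. -/
noncomputable def fiberMax {K : Type*} [Fintype K] {X : K → Type*}
    (G : Finset (∀ j, X j)) (J : Finset K) : ℕ :=
  if J = ∅ then 1
  else if J = Finset.univ then G.card
  else G.sup fun w => (G.filter fun w' => ∀ j ∉ J, w' j = w j).card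

/-! Fix `u` and write `c_j x` for the probability that `A_j x = A_j u_j`. With
`t_j = α_j / |Im A_j|`, let `d_j` be `1` at `u_j`, `c_j` at the heavy partners (`c_j x > t_j`) and
`0` elsewhere; then `c_j ≤ t_j + d_j` pointwise and the hash condition gives
`∑ₓ d_j x ≤ β_j + 1`. By the union bound and independence the probability is at most
`∑_{w ∈ G \ {u}} ∏_j (t_j + d_j w_j)`. Expand the product over the set `J` of coordinates taking
the `t` term: for `J = ∅` the sum is at most `∏_j ∑ₓ d_j x - 1`, and for `J ≠ ∅` the remaining
factor depends only on `w_{J^c}`, each value of which is taken by at most `|G_{J|J^c}|` tuples. -/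

section Ensemble

variable {𝒜 X B : Type*} [Fintype 𝒜] {p : 𝒜 → ℝ} {F : 𝒜 → X → B}

variable (p F) in
lemma collP_comm (u u' : X) : collP p F u u' = collP p F u' u := by
  simp only [collP, eq_comm]

lemma collP_nonneg (hp : ∀ a, 0 ≤ p a) (u u' : X) : 0 ≤ collP p F u u' :=
  sum_nonneg fun a _ => by split_ifs <;> simp [hp a]

lemma collP_self (hp1 : ∑ a, p a = 1) (u : X) : collP p F u u = 1 := by
  simp [collP, hp1]

variable (p F) in
noncomputable def heavyWeight (t : ℝ) (u x : X) : ℝ :=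
  if x = u then 1 else if t < collP p F x u then collP p F x u else 0

lemma heavyWeight_self (t : ℝ) (u : X) : heavyWeight p F t u u = 1 := if_pos rfl

lemma heavyWeight_nonneg (hp : ∀ a, 0 ≤ p a) (t : ℝ) (u x : X) :
    0 ≤ heavyWeight p F t u x := by
  unfold heavyWeight
  split_ifs
  exacts [zero_le_one, collP_nonneg hp x u, le_rfl]

lemma collP_le_add_heavyWeight (hp1 : ∑ a, p a = 1) {t : ℝ} (ht : 0 ≤ t) (u x : X) :
    collP p F x u ≤ t + heavyWeight p F t u x := by
  unfold heavyWeight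
  split_ifs with hx hheavy
  · rw [hx, collP_self hp1]; linarith
  · linarith
  · linarith [not_lt.mp hheavy]

lemma sum_heavyWeight_le [Fintype X] [Fintype B] {α β : ℝ} (hhash : StrongHash p F α β)
    (u : X) : ∑ x, heavyWeight p F (α / Fintype.card B) u x ≤ β + 1 := by
  rw [← add_sum_erase _ _ (mem_univ u), heavyWeight_self, add_comm]
  gcongr
  refine le_of_eq_of_le ?_ (hhash u)
  rw [sum_filter]
  refine sum_congr rfl fun x hx => ?_
  simp only [heavyWeight, if_neg (ne_of_mem_erase hx), collP_comm p F u x]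

end Ensemble

lemma sum_ite_exists_le_sum_sum {α ι : Type*} [Fintype α] (s : Finset ι) (P : α → ι → Prop)
    [∀ a i, Decidable (P a i)] {q : α → ℝ} (hq : ∀ a, 0 ≤ q a) :
    ∑ a, (if ∃ i ∈ s, P a i then q a else 0) ≤ ∑ i ∈ s, ∑ a, if P a i then q a else 0 := by
  have hterm : ∀ a i, 0 ≤ if P a i then q a else 0 := fun a i => by
    split_ifs
    exacts [hq a, le_rfl]
  rw [sum_comm]
  refine sum_le_sum fun a _ => ?_
  split_ifs with h
  · obtain ⟨i, hi, hPi⟩ := h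
    calc q a = if P a i then q a else 0 := (if_pos hPi).symm
      _ ≤ _ := single_le_sum (fun i _ => hterm a i) hi
  · exact sum_nonneg fun i _ => hterm a i

lemma sum_comp_le_mul_sum {α β : Type*} [Fintype β] [DecidableEq β] (s : Finset α) (f : α → β)
    {g : β → ℝ} (hg : ∀ b, 0 ≤ g b) {M : ℕ} (hM : ∀ a ∈ s, #{a' ∈ s | f a' = f a} ≤ M) :
    ∑ a ∈ s, g (f a) ≤ M * ∑ b, g b := by
  rw [sum_comp, mul_sum]
  calc ∑ b ∈ s.image f, #{a ∈ s | f a = b} • g b ≤ ∑ b ∈ s.image f, M * g b := by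
        refine sum_le_sum fun b hb => ?_
        obtain ⟨a, ha, rfl⟩ := mem_image.mp hb
        rw [nsmul_eq_mul]
        exact mul_le_mul_of_nonneg_right (by exact_mod_cast hM a ha) (hg _)
    _ ≤ ∑ b, M * g b :=
        sum_le_sum_of_subset_of_nonneg (subset_univ _)
          fun b _ _ => mul_nonneg (Nat.cast_nonneg _) (hg b)

section Pi

variable {K : Type*} [Fintype K] {X : K → Type*}

lemma prod_collP_eq_sum {B 𝒜 : K → Type*} [∀ j, Fintype (𝒜 j)] (p : ∀ j, 𝒜 j → ℝ)
    (F : ∀ j, 𝒜 j → X j → B j) (w u : ∀ j, X j) :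
    ∏ j, collP (p j) (F j) (w j) (u j) =
      ∑ a : ∀ j, 𝒜 j,
        if ∀ j, F j (a j) (w j) = F j (a j) (u j) then ∏ j, p j (a j) else 0 := by
  simp only [collP, Fintype.prod_sum, Fintype.prod_ite_zero]

lemma card_filter_agree_le_fiberMax (G : Finset (∀ j, X j)) {J : Finset K} (hJ : J.Nonempty)
    {w : ∀ j, X j} (hw : w ∈ G) : #{w' ∈ G | ∀ j ∉ J, w' j = w j} ≤ fiberMax G J := by
  rw [fiberMax, if_neg hJ.ne_empty]
  split_ifs
  · exact card_filter_le _ _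
  · exact le_sup (f := fun w => #{w' ∈ G | ∀ j ∉ J, w' j = w j}) hw

variable [∀ j, Fintype (X j)] {d : ∀ j, X j → ℝ}

lemma sum_prod_compl_le_fiberMax_mul (G : Finset (∀ j, X j)) {J : Finset K} (hJ : J.Nonempty)
    (hd : ∀ j x, 0 ≤ d j x) :
    ∑ w ∈ G, ∏ j ∈ Jᶜ, d j (w j) ≤ fiberMax G J * ∏ j ∈ Jᶜ, ∑ x, d j x := by
  have hfiber : ∀ w ∈ G, #{w' ∈ G | Jᶜ.restrict w' = Jᶜ.restrict w} ≤ fiberMax G J := by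
    intro w hw
    have hagree : ∀ w', Jᶜ.restrict w' = Jᶜ.restrict w ↔ ∀ j ∉ J, w' j = w j := fun w' => by
      simp [funext_iff, Finset.restrict]
    simpa only [hagree] using card_filter_agree_le_fiberMax G hJ hw
  calc ∑ w ∈ G, ∏ j ∈ Jᶜ, d j (w j) = ∑ w ∈ G, ∏ j : ↥Jᶜ, d j (Jᶜ.restrict w j) :=
        sum_congr rfl fun w _ => (prod_coe_sort Jᶜ fun j => d j (w j)).symm
    _ ≤ fiberMax G J * ∑ v : (∀ j : ↥Jᶜ, X j), ∏ j : ↥Jᶜ, d j (v j) :=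
        sum_comp_le_mul_sum G Jᶜ.restrict (g := fun v => ∏ j : ↥Jᶜ, d j (v j))
          (fun v => prod_nonneg fun j _ => hd j (v j)) hfiber
    _ = fiberMax G J * ∏ j ∈ Jᶜ, ∑ x, d j x := by
        rw [← Fintype.prod_sum, prod_coe_sort Jᶜ fun j => ∑ x, d j x]

lemma sum_erase_prod_le (s : Finset (∀ j, X j)) {u : ∀ j, X j} (hd : ∀ j x, 0 ≤ d j x)
    (hdu : ∀ j, d j (u j) = 1) :
    ∑ w ∈ s.erase u, ∏ j, d j (w j) ≤ ∏ j, ∑ x, d j x - 1 :=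
  calc ∑ w ∈ s.erase u, ∏ j, d j (w j) ≤ ∑ w ∈ univ.erase u, ∏ j, d j (w j) :=
        sum_le_sum_of_subset_of_nonneg (erase_subset_erase _ (subset_univ _))
          fun w _ _ => prod_nonneg fun j _ => hd j (w j)
    _ = ∏ j, ∑ x, d j x - 1 := by
        rw [sum_erase_eq_sub (mem_univ u), Fintype.prod_sum, prod_eq_one fun j _ => hdu j]

lemma sum_erase_prod_add_le (G : Finset (∀ j, X j)) (u : ∀ j, X j) {t s : K → ℝ}
    (ht : ∀ j, 0 ≤ t j) (hd : ∀ j x, 0 ≤ d j x) (hdu : ∀ j, d j (u j) = 1)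
    (hds : ∀ j, ∑ x, d j x ≤ s j) :
    ∑ w ∈ G.erase u, ∏ j, (t j + d j (w j)) ≤
      ∑ J ∈ univ.powerset.filter (fun J : Finset K => J.Nonempty),
        fiberMax G J * (∏ j ∈ J, t j) * ∏ j ∈ Jᶜ, s j + (∏ j, s j - 1) := by
  have hsum_nonneg : ∀ j, 0 ≤ ∑ x, d j x := fun j => sum_nonneg fun x _ => hd j x
  have hprod_le : ∀ J : Finset K, ∏ j ∈ J, ∑ x, d j x ≤ ∏ j ∈ J, s j := fun J =>
    prod_le_prod (fun j _ => hsum_nonneg j) fun j _ => hds j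
  have hnonempty : (univ : Finset (Finset K)).erase ∅ =
      univ.powerset.filter (fun J : Finset K => J.Nonempty) := by
    ext J
    simp [nonempty_iff_ne_empty]
  calc ∑ w ∈ G.erase u, ∏ j, (t j + d j (w j))
      = ∑ J : Finset K, (∏ j ∈ J, t j) * ∑ w ∈ G.erase u, ∏ j ∈ Jᶜ, d j (w j) := by
        simp only [Fintype.prod_add, mul_sum]
        exact sum_comm
    _ = ∑ w ∈ G.erase u, ∏ j, d j (w j) +
          ∑ J ∈ univ.powerset.filter (fun J : Finset K => J.Nonempty),
            (∏ j ∈ J, t j) * ∑ w ∈ G.erase u, ∏ j ∈ Jᶜ, d j (w j) := by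
        rw [← add_sum_erase _ _ (mem_univ ∅), hnonempty, prod_empty, one_mul, compl_empty]
    _ ≤ (∏ j, s j - 1) +
          ∑ J ∈ univ.powerset.filter (fun J : Finset K => J.Nonempty),
            (∏ j ∈ J, t j) * (fiberMax G J * ∏ j ∈ Jᶜ, s j) := by
        gcongr with J hJ
        · exact (sum_erase_prod_le G hd hdu).trans (by linarith [hprod_le univ])
        · exact prod_nonneg fun j _ => ht j
        · calc ∑ w ∈ G.erase u, ∏ j ∈ Jᶜ, d j (w j) ≤ ∑ w ∈ G, ∏ j ∈ Jᶜ, d j (w j) :=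
                sum_le_sum_of_subset_of_nonneg (erase_subset u G)
                  fun w _ _ => prod_nonneg fun j _ => hd j (w j)
            _ ≤ fiberMax G J * ∏ j ∈ Jᶜ, ∑ x, d j x :=
                sum_prod_compl_le_fiberMax_mul G (mem_filter.mp hJ).2 hd
            _ ≤ fiberMax G J * ∏ j ∈ Jᶜ, s j :=
                mul_le_mul_of_nonneg_left (hprod_le Jᶜ) (Nat.cast_nonneg _)
    _ = _ := by
        rw [add_comm]
        congr 1
        exact sum_congr rfl fun J _ => by ring

end Pi

theorem stmt8_general {K : Type*} [Fintype K] {X B 𝒜 : K → Type*}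
    [∀ j, Fintype (X j)] [∀ j, Fintype (B j)] [∀ j, Fintype (𝒜 j)]
    (p : ∀ j, 𝒜 j → ℝ) (hp : ∀ j a, 0 ≤ p j a) (hp1 : ∀ j, ∑ a : 𝒜 j, p j a = 1)
    (F : ∀ j, 𝒜 j → X j → B j)
    (α β : K → ℝ) (hα : ∀ j, 0 ≤ α j)
    (hhash : ∀ j, StrongHash (p j) (F j) (α j) (β j))
    (G : Finset (∀ j, X j)) (u : ∀ j, X j) :
    ∑ a : ∀ j, 𝒜 j,
        (if ∃ w ∈ G.erase u, ∀ j, F j (a j) (w j) = F j (a j) (u j)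
          then ∏ j, p j (a j) else 0) ≤
      (∑ J ∈ Finset.univ.powerset.filter (fun J : Finset K => J.Nonempty),
        (fiberMax G J : ℝ) * (∏ j ∈ J, α j) * (∏ j ∈ Jᶜ, (β j + 1))
          / ∏ j ∈ J, (Fintype.card (B j) : ℝ))
        + ((∏ j, (β j + 1)) - 1) := by
  set t : K → ℝ := fun j => α j / Fintype.card (B j)
  have ht : ∀ j, 0 ≤ t j := fun j => div_nonneg (hα j) (Nat.cast_nonneg _)
  set d : ∀ j, X j → ℝ := fun j => heavyWeight (p j) (F j) (t j) (u j)
  calc _ ≤ ∑ w ∈ G.erase u, ∏ j, collP (p j) (F j) (w j) (u j) := by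
        simp only [prod_collP_eq_sum]
        exact sum_ite_exists_le_sum_sum _ _ fun a => prod_nonneg fun j _ => hp j (a j)
    _ ≤ ∑ w ∈ G.erase u, ∏ j, (t j + d j (w j)) := by
        gcongr with w _ j
        · exact fun j _ => collP_nonneg (hp j) _ _
        · exact collP_le_add_heavyWeight (hp1 j) (ht j) _ _
    _ ≤ _ := sum_erase_prod_add_le G u ht (fun j => heavyWeight_nonneg (hp j) _ _)
          (fun j => heavyWeight_self _ _) (fun j => sum_heavyWeight_le (hhash j) (u j))
    _ = _ := by
        congr 1
        refine sum_congr rfl fun J _ => ?_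
        rw [prod_div_distrib]
        ring

/-- Multi-terminal collision-resistance property. -/
theorem stmt8 {K : Type*} [Fintype K] {X B 𝒜 : K → Type*}
    [∀ j, Fintype (X j)] [∀ j, Fintype (B j)] [∀ j, Fintype (𝒜 j)]
    (p : ∀ j, 𝒜 j → ℝ) (hp : ∀ j a, 0 ≤ p j a) (hp1 : ∀ j, ∑ a : 𝒜 j, p j a = 1)
    (F : ∀ j, 𝒜 j → X j → B j)
    (α β : K → ℝ) (hα : ∀ j, 0 ≤ α j) (hβ : ∀ j, 0 ≤ β j)
    (hhash : ∀ j, StrongHash (p j) (F j) (α j) (β j))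
    (G : Finset (∀ j, X j)) (u : ∀ j, X j) :
    ∑ a : ∀ j, 𝒜 j,
        (if ∃ w ∈ G.erase u, ∀ j, F j (a j) (w j) = F j (a j) (u j)
          then ∏ j, p j (a j) else 0) ≤
      (∑ J ∈ Finset.univ.powerset.filter (fun J : Finset K => J.Nonempty),
        (fiberMax G J : ℝ) * (∏ j ∈ J, α j) * (∏ j ∈ Jᶜ, (β j + 1))
          / ∏ j ∈ J, (Fintype.card (B j) : ℝ))
        + ((∏ j, (β j + 1)) - 1) :=
  stmt8_general p hp hp1 F α β hα hhash G u
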